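/- arXiv:2006.01903 — 2 statements merged into one kernel-verified Lean document; each statement's English description precedes it below -/
import Mathlib

section
/- Let M be a complete DFA over a finite alphabet Σ with finite state set, let p be a state, and let v, w ∈ Σ* be words such that Loop_M(p) ⊆ {v}* ∪ {w}*. Then there exists a word u ∈ Σ* such that Loop_M(p) ⊆ {u}*. -/
/-- The `n`-fold concatenation power of a word `u`. -/
def wordPow {α : Type*} (u : List α) : ℕ → List α
  | 0 => []
  | n + 1 => u ++ wordPow u n

/-!
The loop language of `p` is closed under concatenation. If it contained a word `x ∈ {w}* \ {v}*`
and a word `y ∈ {v}* \ {w}*`, then `x ++ y` would be a loop too; but `x ++ y ∈ {v}*` forces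
`x ∈ {v}*` (cancel the power `y` of `v` on the right), and `x ++ y ∈ {w}*` forces `y ∈ {w}*`
(cancel `x` on the left). So the loop language lies entirely in `{v}*` or entirely in `{w}*`.
-/

section WordPow

variable {α : Type*}

def wordPows (u : List α) : Set (List α) := {x | ∃ k : ℕ, x = wordPow u k}

theorem wordPow_add (u : List α) (m n : ℕ) :
    wordPow u (m + n) = wordPow u m ++ wordPow u n := by
  induction m with
  | zero => simp [wordPow]
  | succ m ih => rw [Nat.succ_add]; simp [wordPow, ih]

@[simp]
theorem wordPow_nil (n : ℕ) : wordPow ([] : List α) n = [] := by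
  induction n with
  | zero => rfl
  | succ n ih => simp [wordPow, ih]

theorem length_wordPow (u : List α) (n : ℕ) : (wordPow u n).length = n * u.length := by
  induction n with
  | zero => simp [wordPow]
  | succ n ih => simp [wordPow, ih, Nat.succ_mul, Nat.add_comm]

theorem le_of_length_wordPow_le {u : List α} (hu : u ≠ []) {m n : ℕ}
    (h : (wordPow u m).length ≤ (wordPow u n).length) : m ≤ n := by
  rw [length_wordPow, length_wordPow] at h
  exact Nat.le_of_mul_le_mul_right h (List.length_pos_iff.mpr hu)

theorem eq_wordPow_sub_of_append_eq {u x : List α} {m n : ℕ}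
    (h : x ++ wordPow u m = wordPow u n) : x = wordPow u (n - m) := by
  rcases eq_or_ne u [] with rfl | hu
  · simpa using h
  have hmn : m ≤ n := le_of_length_wordPow_le hu (by simp [← h])
  rw [← Nat.sub_add_cancel hmn, wordPow_add] at h
  exact List.append_cancel_right h

theorem eq_wordPow_sub_of_eq_append {u x : List α} {m n : ℕ}
    (h : wordPow u m ++ x = wordPow u n) : x = wordPow u (n - m) := by
  rcases eq_or_ne u [] with rfl | hu
  · simpa using h
  have hmn : m ≤ n := le_of_length_wordPow_le hu (by simp [← h])
  rw [← Nat.add_sub_cancel' hmn, wordPow_add] at h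
  exact List.append_cancel_left h

theorem mem_wordPows_left_of_append_mem {u x y : List α} (hy : y ∈ wordPows u)
    (hxy : x ++ y ∈ wordPows u) : x ∈ wordPows u := by
  obtain ⟨m, rfl⟩ := hy
  obtain ⟨n, hn⟩ := hxy
  exact ⟨n - m, eq_wordPow_sub_of_append_eq hn⟩

theorem mem_wordPows_right_of_append_mem {u x y : List α} (hx : x ∈ wordPows u)
    (hxy : x ++ y ∈ wordPows u) : y ∈ wordPows u := by
  obtain ⟨m, rfl⟩ := hx
  obtain ⟨n, hn⟩ := hxy
  exact ⟨n - m, eq_wordPow_sub_of_eq_append hn⟩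

theorem subset_wordPows_or_of_append_closed {S : Set (List α)}
    (hS : ∀ x ∈ S, ∀ y ∈ S, x ++ y ∈ S) {v w : List α} (h : S ⊆ wordPows v ∪ wordPows w) :
    S ⊆ wordPows v ∨ S ⊆ wordPows w := by
  by_contra! hvw
  obtain ⟨⟨x, hxS, hxv⟩, ⟨y, hyS, hyw⟩⟩ := And.imp Set.not_subset.mp Set.not_subset.mp hvw
  have hxw : x ∈ wordPows w := (h hxS).resolve_left hxv
  have hyv : y ∈ wordPows v := (h hyS).resolve_right hyw
  rcases h (hS x hxS y hyS) with hxy | hxy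
  · exact hxv (mem_wordPows_left_of_append_mem hyv hxy)
  · exact hyw (mem_wordPows_right_of_append_mem hxw hxy)

end WordPow

def DFA.loopLanguage {α σ : Type*} (M : DFA α σ) (p : σ) : Set (List α) :=
  {x | M.evalFrom p x = p}

theorem DFA.append_mem_loopLanguage {α σ : Type*} {M : DFA α σ} {p : σ} {x y : List α}
    (hx : x ∈ M.loopLanguage p) (hy : y ∈ M.loopLanguage p) : x ++ y ∈ M.loopLanguage p := by
  simp only [DFA.loopLanguage, Set.mem_ofPred_eq, DFA.evalFrom_of_append] at hx hy ⊢
  rw [hx, hy]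

theorem stmt_6_general {α : Type*} {σ : Type*} (M : DFA α σ) (p : σ)
    (v w : List α)
    (h : {x : List α | M.evalFrom p x = p} ⊆
        {x : List α | ∃ k : ℕ, x = wordPow v k} ∪ {x : List α | ∃ k : ℕ, x = wordPow w k}) :
    ∃ u : List α,
      {x : List α | M.evalFrom p x = p} ⊆ {x : List α | ∃ k : ℕ, x = wordPow u k} := by
  rcases subset_wordPows_or_of_append_closed
      (fun _ hx _ hy => DFA.append_mem_loopLanguage hx hy) h with hv | hw
  · exact ⟨v, hv⟩
  · exact ⟨w, hw⟩

/-- If the loop language of a state `p` of a complete DFA is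
contained in `{v}* ∪ {w}*`, then it is contained in `{u}*` for some word `u`. -/
theorem stmt_6 {α : Type*} [Fintype α] {σ : Type*} [Fintype σ] (M : DFA α σ) (p : σ)
    (v w : List α)
    (h : {x : List α | M.evalFrom p x = p} ⊆
        {x : List α | ∃ k : ℕ, x = wordPow v k} ∪ {x : List α | ∃ k : ℕ, x = wordPow w k}) :
    ∃ u : List α,
      {x : List α | M.evalFrom p x = p} ⊆ {x : List α | ∃ k : ℕ, x = wordPow u k} :=
  stmt_6_general M p v w h
end

section
/- If U, V ⊆ Σ* are polycyclic languages over a finite alphabet Σ, then their intersection U ∩ V is polycyclic. -/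
/-- A language is polycyclic if it is accepted by a complete DFA with finite
state set all of whose loop languages are contained in the powers of a single
word. -/
def Language.IsPolycyclic {α : Type*} (L : Language α) : Prop :=
  ∃ (σ : Type) (_ : Fintype σ) (M : DFA α σ),
    (∀ p : σ, ∃ u : List α,
        {w : List α | M.evalFrom p w = p} ⊆ {w : List α | ∃ k : ℕ, w = wordPow u k}) ∧
    M.accepts = L

/-- Product DFA recognizing the intersection. -/
def prodDFA {α : Type*} {σ₁ σ₂ : Type} (M : DFA α σ₁) (N : DFA α σ₂) :
    DFA α (σ₁ × σ₂) where
  step := fun p a => (M.step p.1 a, N.step p.2 a)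
  start := (M.start, N.start)
  accept := {x | x.1 ∈ M.accept ∧ x.2 ∈ N.accept}

theorem prodDFA_evalFrom {α : Type*} {σ₁ σ₂ : Type} (M : DFA α σ₁) (N : DFA α σ₂)
    (p : σ₁ × σ₂) (w : List α) :
    (prodDFA M N).evalFrom p w = (M.evalFrom p.1 w, N.evalFrom p.2 w) := by
  induction w generalizing p with
  | nil => rfl
  | cons a w ih =>
    simp only [DFA.evalFrom, List.foldl_cons] at *
    exact ih _

/-- The intersection of two polycyclic languages is polycyclic. -/
theorem stmt_13 {α : Type*} [Fintype α] (U V : Language α)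
    (hU : U.IsPolycyclic) (hV : V.IsPolycyclic) : Language.IsPolycyclic (U ⊓ V) := by
  obtain ⟨σ₁, i₁, M, hMloop, hMacc⟩ := hU
  obtain ⟨σ₂, i₂, N, hNloop, hNacc⟩ := hV
  refine ⟨σ₁ × σ₂, @instFintypeProd _ _ i₁ i₂, prodDFA M N, ?_, ?_⟩
  · rintro ⟨p, q⟩
    obtain ⟨u, hu⟩ := hMloop p
    refine ⟨u, fun w hw => ?_⟩
    apply hu
    have := hw
    simp only [Set.mem_setOf_eq, prodDFA_evalFrom, Prod.mk.injEq] at this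
    exact this.1
  · ext w
    have : w ∈ (prodDFA M N).accepts ↔ w ∈ M.accepts ∧ w ∈ N.accepts := by
      simp only [DFA.mem_accepts, DFA.eval, prodDFA_evalFrom]
      exact Iff.rfl
    rw [this, hMacc, hNacc]
    rfl
end
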